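/- The width function of a self-similar hierarchical branching process equals C_{p,γ,ζ}(s) = 1 + Σ_{m=1}^∞ ((sγ/ζ)^m/m!) [∏_{i=1}^m t̂(ζ^{−i}(1−p))] · p/(1 − ζ^{−m}(1−p)), using Σ_{j=1}^∞ λ_j^m p_j = γ^m ζ^{−m} p/(1 − ζ^{−m}(1−p)). -/

import Mathlib

/-!
Both operators preserve geometric sequences: `Λ` maps `c rⁿ` to `(cγ/ζ) (r/ζ)ⁿ`, and `G` maps
`c rⁿ` to `c t̂(r) rⁿ` because its rows are shifted copies of the coefficients of `t̂`. Hence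
`(GΛ)ᵐ π` is geometric with ratio `(1-p)/ζᵐ`, its total mass is a geometric series, and summing
the exponential series of `GΛ` term by term, through the continuous functional `x ↦ ∑ⱼ xⱼ` on
`ℓ¹`, gives the formula for `C(s)`.
-/

open Finset NormedSpace
open scoped lp Nat

/-- The generating function `t̂` of the paper. -/
noncomputable def tokunagaGF (T : ℕ → ℝ) (r : ℝ) : ℝ :=
  -1 + 2 * r + ∑' k : ℕ, T (k + 1) * r ^ (k + 1)

lemma summable_tokunaga_of_le {T : ℕ → ℝ} (hT : ∀ k, 0 ≤ T k) {r R : ℝ} (hr : 0 ≤ r)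
    (hrR : r ≤ R) (hR : Summable fun k : ℕ => T (k + 1) * R ^ (k + 1)) :
    Summable fun k : ℕ => T (k + 1) * r ^ (k + 1) :=
  hR.of_nonneg_of_le (fun _ => mul_nonneg (hT _) (pow_nonneg hr _))
    fun _ => mul_le_mul_of_nonneg_left (pow_le_pow_left₀ hr hrR _) (hT _)

lemma tsum_tokunaga_shift {T : ℕ → ℝ} {r : ℝ}
    (hs : Summable fun k : ℕ => T (k + 1) * r ^ (k + 1)) :
    ∑' k : ℕ, T (k + 2) * r ^ (k + 2) = ∑' k : ℕ, T (k + 1) * r ^ (k + 1) - T 1 * r := by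
  rw [hs.tsum_eq_zero_add]
  ring

section Geometric

variable {T : ℕ → ℝ} {Gop : ℓ¹(ℕ, ℝ) →L[ℝ] ℓ¹(ℕ, ℝ)}

lemma generator_apply_geometric
    (hG : ∀ (x : ℓ¹(ℕ, ℝ)) (n : ℕ),
      Gop x n = -(x n) + (T 1 + 2) * x (n + 1) + ∑' k : ℕ, T (k + 2) * x (n + k + 2))
    {r c : ℝ} (hs : Summable fun k : ℕ => T (k + 1) * r ^ (k + 1))
    {z : ℓ¹(ℕ, ℝ)} (hz : ∀ n, z n = c * r ^ n) (n : ℕ) :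
    Gop z n = c * tokunagaGF T r * r ^ n := by
  have htail : ∑' k : ℕ, T (k + 2) * z (n + k + 2)
      = c * r ^ n * ∑' k : ℕ, T (k + 2) * r ^ (k + 2) := by
    rw [← tsum_mul_left]
    exact tsum_congr fun k => by rw [hz, add_assoc, pow_add]; ring
  rw [hG, hz, hz, htail, tsum_tokunaga_shift hs, tokunagaGF]
  ring

lemma diagonal_apply_geometric {γ ζ : ℝ} (hζ : ζ ≠ 0) {Lam : ℓ¹(ℕ, ℝ) →L[ℝ] ℓ¹(ℕ, ℝ)}
    (hLam : ∀ (x : ℓ¹(ℕ, ℝ)) (n : ℕ), Lam x n = γ / ζ ^ (n + 1) * x n)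
    {r c : ℝ} {z : ℓ¹(ℕ, ℝ)} (hz : ∀ n, z n = c * r ^ n) (n : ℕ) :
    Lam z n = c * (γ / ζ) * (r / ζ) ^ n := by
  rw [hLam, hz, pow_succ, div_pow]
  field_simp

lemma iterate_apply_geometric (hT : ∀ k, 0 ≤ T k) {q γ ζ : ℝ} (hq : 0 ≤ q) (hζ : 1 ≤ ζ)
    (hsum : Summable fun k : ℕ => T (k + 1) * (q / ζ) ^ (k + 1))
    (hG : ∀ (x : ℓ¹(ℕ, ℝ)) (n : ℕ),
      Gop x n = -(x n) + (T 1 + 2) * x (n + 1) + ∑' k : ℕ, T (k + 2) * x (n + k + 2))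
    {Lam : ℓ¹(ℕ, ℝ) →L[ℝ] ℓ¹(ℕ, ℝ)}
    (hLam : ∀ (x : ℓ¹(ℕ, ℝ)) (n : ℕ), Lam x n = γ / ζ ^ (n + 1) * x n)
    {c : ℝ} {v : ℓ¹(ℕ, ℝ)} (hv : ∀ n, v n = c * q ^ n) (m n : ℕ) :
    ((Gop.comp Lam) ^ m) v n =
      c * (∏ i ∈ range m, γ / ζ * tokunagaGF T (q / ζ ^ (i + 1))) * (q / ζ ^ m) ^ n := by
  have hζ0 : 0 < ζ := one_pos.trans_le hζ
  induction m generalizing n with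
  | zero => simp [hv]
  | succ m ih =>
    have hratio : q / ζ ^ m / ζ = q / ζ ^ (m + 1) := by rw [div_div, pow_succ]
    have hs : Summable fun k : ℕ => T (k + 1) * (q / ζ ^ (m + 1)) ^ (k + 1) :=
      summable_tokunaga_of_le hT (by positivity)
        (div_le_div_of_nonneg_left hq hζ0 (le_self_pow₀ hζ m.succ_ne_zero)) hsum
    have hΛ := diagonal_apply_geometric hζ0.ne' hLam ih
    simp only [hratio] at hΛ
    rw [pow_succ', mul_apply_eq_comp, ContinuousLinearMap.comp_apply,
      generator_apply_geometric hG hs hΛ, prod_range_succ]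
    ring

end Geometric

lemma one_sub_div_pow_nonneg_and_lt_one {p ζ : ℝ} (hp : 0 < p) (hp1 : p < 1) (hζ : 1 ≤ ζ) (m : ℕ) :
    0 ≤ (1 - p) / ζ ^ m ∧ (1 - p) / ζ ^ m < 1 := by
  have hζm : 1 ≤ ζ ^ m := one_le_pow₀ hζ
  refine ⟨div_nonneg (by linarith) (by linarith), ?_⟩
  rw [div_lt_one (by linarith)]
  linarith

lemma tsum_rate_pow_mul_weights {p γ ζ : ℝ} (hp : 0 < p) (hp1 : p < 1) (hζ : 1 ≤ ζ) (m : ℕ) :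
    ∑' j : ℕ, (γ / ζ ^ (j + 1)) ^ m * (p * (1 - p) ^ j) =
      γ ^ m / ζ ^ m * (p / (1 - (1 - p) / ζ ^ m)) := by
  have hζ0 : ζ ≠ 0 := (one_pos.trans_le hζ).ne'
  have hterm : ∀ j : ℕ, (γ / ζ ^ (j + 1)) ^ m * (p * (1 - p) ^ j) =
      γ ^ m / ζ ^ m * p * ((1 - p) / ζ ^ m) ^ j := fun j => by
    have hpow : (ζ ^ (j + 1)) ^ m = ζ ^ m * (ζ ^ m) ^ j := by ring
    rw [div_pow, div_pow, hpow]
    field_simp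
  obtain ⟨hr0, hr1⟩ := one_sub_div_pow_nonneg_and_lt_one hp hp1 hζ m
  rw [tsum_congr hterm, tsum_mul_left, tsum_geometric_of_lt_one hr0 hr1, mul_assoc,
    ← div_eq_mul_inv]

lemma hasSum_exp_smul_apply {E F : Type*} [NormedAddCommGroup E] [NormedSpace ℝ E]
    [CompleteSpace E] [NormedAddCommGroup F] [NormedSpace ℝ F]
    (L : E →L[ℝ] F) (A : E →L[ℝ] E) (v : E) (s : ℝ) :
    HasSum (fun n => ((n ! : ℝ)⁻¹ * s ^ n) • L ((A ^ n) v)) (L (exp (s • A) v)) := by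
  have h := (exp_series_hasSum_exp' (𝕂 := ℝ) (s • A)).mapL
    (L.comp (ContinuousLinearMap.apply ℝ E v))
  simpa [smul_pow, smul_smul] using h

theorem stmt_13_general (T : ℕ → ℝ) (hT : ∀ k, 0 ≤ T k)
    (p γ ζ : ℝ) (hp : 0 < p) (hp1 : p < 1) (hζ : 1 ≤ ζ)
    (hsum : Summable fun k : ℕ => T (k + 1) * ((1 - p) / ζ) ^ (k + 1))
    (p0 : lp (fun _ : ℕ => ℝ) 1) (hp0 : ∀ n : ℕ, p0 n = p * (1 - p) ^ n)
    (Gop Lam : lp (fun _ : ℕ => ℝ) 1 →L[ℝ] lp (fun _ : ℕ => ℝ) 1)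
    (hG : ∀ (x : lp (fun _ : ℕ => ℝ) 1) (n : ℕ),
      Gop x n = -(x n) + (T 1 + 2) * x (n + 1) +
        ∑' k : ℕ, T (k + 2) * x (n + k + 2))
    (hLam : ∀ (x : lp (fun _ : ℕ => ℝ) 1) (n : ℕ),
      Lam x n = γ / ζ ^ (n + 1) * x n) :
    (∀ m : ℕ, 1 ≤ m →
      ∑' j : ℕ, (γ / ζ ^ (j + 1)) ^ m * (p * (1 - p) ^ j) =
        γ ^ m / ζ ^ m * (p / (1 - (1 - p) / ζ ^ m))) ∧
    (∀ s : ℝ, 0 ≤ s →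
      ∑' j : ℕ, (NormedSpace.exp (s • (Gop.comp Lam)) p0) j =
        1 + ∑' m : ℕ,
          ((s * γ / ζ) ^ (m + 1) / (Nat.factorial (m + 1)) *
            (∏ i ∈ Finset.range (m + 1),
              (-1 + 2 * ((1 - p) / ζ ^ (i + 1)) +
                ∑' k : ℕ, T (k + 1) * ((1 - p) / ζ ^ (i + 1)) ^ (k + 1))) *
            (p / (1 - (1 - p) / ζ ^ (m + 1))))) := by
  refine ⟨fun m _ => tsum_rate_pow_mul_weights hp hp1 hζ m, fun s _ => ?_⟩
  have hmass : ∀ n, ∑' j, (((Gop.comp Lam) ^ n) p0) j =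
      p * (∏ i ∈ range n, γ / ζ * tokunagaGF T ((1 - p) / ζ ^ (i + 1))) /
        (1 - (1 - p) / ζ ^ n) := fun n => by
    obtain ⟨hr0, hr1⟩ := one_sub_div_pow_nonneg_and_lt_one hp hp1 hζ n
    rw [tsum_congr (iterate_apply_geometric hT (by linarith) hζ hsum hG hLam hp0 n),
      tsum_mul_left, tsum_geometric_of_lt_one hr0 hr1, ← div_eq_mul_inv]
  have hexp := hasSum_exp_smul_apply (lp.tsumCLM (α := ℕ) (𝕜 := ℝ) (E := ℝ)) (Gop.comp Lam) p0 s
  simp only [lp.tsumCLM_apply, hmass, smul_eq_mul] at hexp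
  rw [← hexp.tsum_eq, hexp.summable.tsum_eq_zero_add]
  congr 1
  · simp [hp.ne']
  · refine tsum_congr fun m => ?_
    simp only [tokunagaGF, prod_mul_distrib, prod_const, card_range]
    ring

/-- **Width function of a self-similar process.**
With `λ_j = γ ζ^{-j}`, `p_j = p(1-p)^{j-1}`, and `x(s) = e^{GΛs} π` in `ℓ¹`
as in the hydrodynamic limit, the geometric-series identity
`∑_{j≥1} λ_j^m p_j = γ^m ζ^{-m} p/(1 - ζ^{-m}(1-p))` holds, and the width
function `C_{p,γ,ζ}(s) = ∑_j x_j(s)` equals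
`1 + ∑_{m≥1} ((sγ/ζ)^m/m!) [∏_{i=1}^m t̂(ζ^{-i}(1-p))] p/(1 - ζ^{-m}(1-p))`. -/
theorem stmt_13 (T : ℕ → ℝ) (hT : ∀ k, 0 ≤ T k)
    (p γ ζ : ℝ) (hp : 0 < p) (hp1 : p < 1) (hγ : 0 < γ) (hζ : 1 ≤ ζ)
    (hsum : Summable fun k : ℕ => T (k + 1) * ((1 - p) / ζ) ^ (k + 1))
    (p0 : lp (fun _ : ℕ => ℝ) 1) (hp0 : ∀ n : ℕ, p0 n = p * (1 - p) ^ n)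
    (Gop Lam : lp (fun _ : ℕ => ℝ) 1 →L[ℝ] lp (fun _ : ℕ => ℝ) 1)
    (hG : ∀ (x : lp (fun _ : ℕ => ℝ) 1) (n : ℕ),
      Gop x n = -(x n) + (T 1 + 2) * x (n + 1) +
        ∑' k : ℕ, T (k + 2) * x (n + k + 2))
    (hLam : ∀ (x : lp (fun _ : ℕ => ℝ) 1) (n : ℕ),
      Lam x n = γ / ζ ^ (n + 1) * x n) :
    (∀ m : ℕ, 1 ≤ m →
      ∑' j : ℕ, (γ / ζ ^ (j + 1)) ^ m * (p * (1 - p) ^ j) =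
        γ ^ m / ζ ^ m * (p / (1 - (1 - p) / ζ ^ m))) ∧
    (∀ s : ℝ, 0 ≤ s →
      ∑' j : ℕ, (NormedSpace.exp (s • (Gop.comp Lam)) p0) j =
        1 + ∑' m : ℕ,
          ((s * γ / ζ) ^ (m + 1) / (Nat.factorial (m + 1)) *
            (∏ i ∈ Finset.range (m + 1),
              (-1 + 2 * ((1 - p) / ζ ^ (i + 1)) +
                ∑' k : ℕ, T (k + 1) * ((1 - p) / ζ ^ (i + 1)) ^ (k + 1))) *
            (p / (1 - (1 - p) / ζ ^ (m + 1))))) :=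
  stmt_13_general T hT p γ ζ hp hp1 hζ hsum p0 hp0 Gop Lam hG hLam
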